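/- arXiv:1109.0635 — 2 statements merged into one kernel-verified Lean document; each statement's English description precedes it below -/
import Mathlib

section
/- Let d ≥ 1, p ∈ [d,∞) and r = p/d. If f ∈ L_{p,π}(μ^d) is such that the function J_d f is real-valued and nonnegative μ^d-almost everywhere on X^d, then D_d f ≥ 0 μ-almost everywhere on X. That is, the diagonal restriction operator D_d preserves positivity of real-valued functions. -/
open MeasureTheory Filter Topology ENNReal ProbabilityTheory

noncomputable section

namespace VonMises

variable {X : Type} [MeasurableSpace X]

/-- The `d`-fold product measure `μ^d` on the power space `X^d`. -/
abbrev pm (μ : Measure X) (d : ℕ) : Measure (Fin d → X) := Measure.pi fun _ => μ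

/-- `(E, tp)` is (a realization of) the projective tensor product
`L_{p 0}(μ) ⊗̂_π ⋯ ⊗̂_π L_{p (d-1)}(μ)`: `tp` is a continuous multilinear map
satisfying the cross-norm identity, whose range spans a dense subspace, and which has
the (isometric) universal lifting property of the projective tensor norm. -/
structure IsPTP (μ : Measure X) {d : ℕ} (p : Fin d → ℝ≥0∞) [∀ i, Fact (1 ≤ p i)]
    (E : Type) [NormedAddCommGroup E] [NormedSpace ℝ E] [CompleteSpace E]
    (tp : ContinuousMultilinearMap ℝ (fun i : Fin d => Lp ℝ (p i) μ) E) : Prop where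
  crossNorm : ∀ f : ∀ i : Fin d, Lp ℝ (p i) μ, ‖tp f‖ = ∏ i, ‖f i‖
  denseSpan : Dense (Submodule.span ℝ (Set.range fun f : ∀ i : Fin d, Lp ℝ (p i) μ => tp f) : Set E)
  lift : ∀ (F : Type) [NormedAddCommGroup F] [NormedSpace ℝ F] [CompleteSpace F]
      (g : ContinuousMultilinearMap ℝ (fun i : Fin d => Lp ℝ (p i) μ) F),
      ∃ L : E →L[ℝ] F, (∀ f, L (tp f) = g f) ∧ ‖L‖ = ‖g‖

/-- `J` realizes the canonical map from the projective tensor product into `L_q(μ^d)`,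
determined by its values on elementary tensors. -/
def IsEmbed (μ : Measure X) {d : ℕ} (p : Fin d → ℝ≥0∞) [∀ i, Fact (1 ≤ p i)]
    (q : ℝ≥0∞) [Fact (1 ≤ q)]
    {E : Type} [NormedAddCommGroup E] [NormedSpace ℝ E] [CompleteSpace E]
    (tp : ContinuousMultilinearMap ℝ (fun i : Fin d => Lp ℝ (p i) μ) E)
    (J : E →L[ℝ] Lp ℝ q (pm μ d)) : Prop :=
  ∀ f, (J (tp f) : (Fin d → X) → ℝ) =ᵐ[pm μ d] fun x => ∏ i, (f i : X → ℝ) (x i)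

/-- `D` realizes the diagonal restriction operator: the norm-one linear map sending an
elementary tensor `f_1 ⊗ ⋯ ⊗ f_d` to the pointwise product `x ↦ f_1(x)⋯f_d(x)`. -/
def IsDiag (μ : Measure X) {d : ℕ} (p : Fin d → ℝ≥0∞) [∀ i, Fact (1 ≤ p i)]
    (r : ℝ≥0∞) [Fact (1 ≤ r)]
    {E : Type} [NormedAddCommGroup E] [NormedSpace ℝ E] [CompleteSpace E]
    (tp : ContinuousMultilinearMap ℝ (fun i : Fin d => Lp ℝ (p i) μ) E)
    (D : E →L[ℝ] Lp ℝ r μ) : Prop :=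
  ‖D‖ = 1 ∧ ∀ f, (D (tp f) : X → ℝ) =ᵐ[μ] fun x => ∏ i, (f i : X → ℝ) x

/-- `W` realizes the tensor Koopman operator `V^𝐤 = V_1^{k_1} ⊗_π ⋯ ⊗_π V_d^{k_d}`,
where `V_i g = g ∘ T_i`. -/
def IsTKoop (μ : Measure X) {d : ℕ} (p : Fin d → ℝ≥0∞) [∀ i, Fact (1 ≤ p i)]
    {E : Type} [NormedAddCommGroup E] [NormedSpace ℝ E] [CompleteSpace E]
    (tp : ContinuousMultilinearMap ℝ (fun i : Fin d => Lp ℝ (p i) μ) E)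
    (T : Fin d → X → X) (k : Fin d → ℕ) (W : E →L[ℝ] E) : Prop :=
  ∀ f g : ∀ i : Fin d, Lp ℝ (p i) μ,
    (∀ i, (g i : X → ℝ) =ᵐ[μ] fun x => (f i : X → ℝ) ((T i)^[k i] x)) → W (tp f) = tp g

/-- `g = V^{*k} f`: the adjoint (transfer) operator applied to `f`, characterized by
`∫_s g dμ = ∫_{T^{-k} s} f dμ` for all measurable `s`. -/
def IsTransfer (μ : Measure X) (T : X → X) (k : ℕ) {p : ℝ≥0∞} [Fact (1 ≤ p)]
    (f g : Lp ℝ p μ) : Prop :=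
  ∀ s : Set X, MeasurableSet s → ∫ x in s, g x ∂μ = ∫ x in T^[k] ⁻¹' s, f x ∂μ

/-- `W` realizes the tensor transfer operator `V^{*𝐤} = V_1^{*k_1} ⊗_π ⋯ ⊗_π V_d^{*k_d}`. -/
def IsTTrans (μ : Measure X) {d : ℕ} (p : Fin d → ℝ≥0∞) [∀ i, Fact (1 ≤ p i)]
    {E : Type} [NormedAddCommGroup E] [NormedSpace ℝ E] [CompleteSpace E]
    (tp : ContinuousMultilinearMap ℝ (fun i : Fin d => Lp ℝ (p i) μ) E)
    (T : Fin d → X → X) (k : Fin d → ℕ) (W : E →L[ℝ] E) : Prop :=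
  ∀ f g : ∀ i : Fin d, Lp ℝ (p i) μ,
    (∀ i, IsTransfer μ (T i) (k i) (f i) (g i)) → W (tp f) = tp g

/-- The σ-algebra of `T`-invariant measurable sets. -/
def invariants (T : X → X) : MeasurableSpace X where
  MeasurableSet' s := MeasurableSet s ∧ T ⁻¹' s = s
  measurableSet_empty := ⟨MeasurableSet.empty, rfl⟩
  measurableSet_compl s hs := ⟨hs.1.compl, by rw [Set.preimage_compl, hs.2]⟩
  measurableSet_iUnion s hs :=
    ⟨MeasurableSet.iUnion fun i => (hs i).1, by
      simp only [Set.preimage_iUnion]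
      exact Set.iUnion_congr fun i => (hs i).2⟩

/-- `W` realizes `E_{inv,1} ⊗_π ⋯ ⊗_π E_{inv,d}`, the projective tensor product of the
conditional expectations with respect to the invariant σ-fields. -/
def IsTCondexpInv (μ : Measure X) {d : ℕ} (p : Fin d → ℝ≥0∞) [∀ i, Fact (1 ≤ p i)]
    {E : Type} [NormedAddCommGroup E] [NormedSpace ℝ E] [CompleteSpace E]
    (tp : ContinuousMultilinearMap ℝ (fun i : Fin d => Lp ℝ (p i) μ) E)
    (T : Fin d → X → X) (W : E →L[ℝ] E) : Prop :=
  ∀ f g : ∀ i : Fin d, Lp ℝ (p i) μ,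
    (∀ i, (g i : X → ℝ) =ᵐ[μ] μ[(f i : X → ℝ) | invariants (T i)]) → W (tp f) = tp g

/-- Exactness of a measure preserving transformation: the tail σ-field
`⋂_n T^{-n}𝓕` is trivial mod `μ`. -/
def Exact (μ : Measure X) (T : X → X) : Prop :=
  ∀ s : Set X, (∀ n : ℕ, ∃ t : Set X, MeasurableSet t ∧ s = T^[n] ⁻¹' t) →
    μ s = 0 ∨ μ s = 1

/-- A kernel of `m` variables is canonical (totally degenerate) if integrating out any
one variable gives `0` almost everywhere. -/
def Canonical (μ : Measure X) (m : ℕ) (h : (Fin m → X) → ℝ) : Prop :=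
  ∀ l : Fin m, ∀ᵐ x ∂ pm μ m, ∫ y, h (Function.update x l y) ∂μ = 0

/-- A kernel of `d` variables is symmetric if it is a.e. invariant under permutations of
its variables. -/
def Symm (μ : Measure X) (d : ℕ) (h : (Fin d → X) → ℝ) : Prop :=
  ∀ σ : Equiv.Perm (Fin d), ∀ᵐ x ∂ pm μ d, h (x ∘ σ) = h x

end VonMises

/-
It suffices that `∫_s D f ≥ 0` for every measurable `s`. Let `𝒫ₙ` be the refining finite
partitions generating the σ-algebra of `X`, and let `ψₙ` integrate `J e` against the nonnegative
weight `∑_{B ∈ 𝒫ₙ} μ(B)^{1-d} 1_{(B ∩ s)^d}`, which concentrates on the diagonal of `X^d`; then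
`ψₙ f ≥ 0`. On an elementary tensor, `ψₙ (h₁ ⊗ ⋯ ⊗ h_d) = ∫ ∏ᵢ E[1_s hᵢ | 𝒫ₙ] dμ`. Hölder's
inequality (this is where `d ≤ p` enters) and the contractivity of conditional expectations bound
this by `∏ ‖hᵢ‖_p`, so `‖ψₙ‖ ≤ 1` by the universal property of the projective norm. For bounded
`hᵢ`, martingale convergence gives `ψₙ (h₁ ⊗ ⋯ ⊗ h_d) → ∫_s ∏ hᵢ = ∫_s D (h₁ ⊗ ⋯ ⊗ h_d)`.
Equicontinuity of `(ψₙ)` extends the convergence to all of `E`, so `∫_s D f = lim ψₙ f ≥ 0`.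
-/

open MeasurableSpace

namespace VonMises

lemma lintegral_prod_enorm_le_prod_eLpNorm {α ι E : Type*} [MeasurableSpace α] [Fintype ι]
    [NormedAddCommGroup E] (μ : Measure α) [IsProbabilityMeasure μ] {p : ℝ≥0∞} (hp0 : p ≠ 0)
    (hp_top : p ≠ ∞) (hp : (Fintype.card ι : ℝ≥0∞) ≤ p) {g : ι → α → E}
    (hg : ∀ i, AEStronglyMeasurable (g i) μ) :
    ∫⁻ x, ∏ i, ‖g i x‖ₑ ∂μ ≤ ∏ i, eLpNorm (g i) p μ := by
  have hq : 0 < p.toReal := ENNReal.toReal_pos hp0 hp_top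
  have hcard : (Fintype.card ι : ℝ) ≤ p.toReal := by
    simpa using ENNReal.toReal_mono hp_top hp
  -- Hölder with exponents `1/p` for each factor and `1 - card ι / p` for the constant `1`.
  have key := ENNReal.lintegral_mul_prod_norm_pow_le (μ := μ) Finset.univ (g := fun _ => 1)
    (f := fun i x => ‖g i x‖ₑ ^ p.toReal) aemeasurable_const
    (fun i _ => (hg i).enorm.pow_const _) (1 - Fintype.card ι / p.toReal)
    (p := fun _ => 1 / p.toReal)
    (by simp [Finset.card_univ]; field_simp; ring)
    (sub_nonneg.mpr ((div_le_one hq).mpr hcard)) (fun _ _ => by positivity)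
  simp_rw [← ENNReal.rpow_mul, mul_one_div_cancel hq.ne', ENNReal.rpow_one, ENNReal.one_rpow,
    one_mul, lintegral_const, measure_univ, mul_one, ENNReal.one_rpow, one_mul] at key
  simpa [eLpNorm_eq_lintegral_rpow_enorm_toReal hp0 hp_top] using key

section PartitionAverage

variable {X : Type*} [MeasurableSpace X] [CountablyGenerated X] (μ : Measure X)

noncomputable def partitionAverage (n : ℕ) (k : X → ℝ) (x : X) : ℝ :=
  ⨍ y in countablePartitionSet n x, k y ∂μ

variable {μ} in
lemma partitionAverage_of_mem {n : ℕ} {k : X → ℝ} {B : Set X} (hB : B ∈ countablePartition X n)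
    {x : X} (hx : x ∈ B) : partitionAverage μ n k x = ⨍ y in B, k y ∂μ := by
  rw [partitionAverage, countablePartitionSet_of_mem hB hx]

lemma partitionAverage_congr_ae {k k' : X → ℝ} (h : k =ᵐ[μ] k') (n : ℕ) :
    partitionAverage μ n k = partitionAverage μ n k' :=
  funext fun _ => average_congr (ae_restrict_of_ae h)

lemma stronglyMeasurable_partitionAverage (n : ℕ) (k : X → ℝ) :
    StronglyMeasurable[countableFiltration X n] (partitionAverage μ n k) :=
  ((measurable_from_top (f := fun B : countablePartition X n => ⨍ y in (B : Set X), k y ∂μ)).comp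
    (measurable_countablePartitionSet_subtype n ⊤)).stronglyMeasurable

lemma comp_countablePartitionSet_eq_sum_indicator {E : Type*} [AddCommMonoid E] (n : ℕ) (G : Set X → E)
    (x : X) : G (countablePartitionSet n x) =
      ∑ B ∈ (finite_countablePartition X n).toFinset, B.indicator (fun _ => G B) x := by
  rw [Finset.sum_eq_single_of_mem _ (by simpa using countablePartitionSet_mem n x),
    Set.indicator_of_mem (mem_countablePartitionSet n x)]
  intro B hB hne
  refine Set.indicator_of_notMem (fun hx => hne ?_) _
  exact ((countablePartitionSet_eq_iff x (by simpa using hB)).mpr hx).symm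

variable [IsFiniteMeasure μ]

lemma integrable_comp_countablePartitionSet {E : Type*} [NormedAddCommGroup E] (n : ℕ)
    (G : Set X → E) : Integrable (fun x => G (countablePartitionSet n x)) μ := by
  simp_rw [comp_countablePartitionSet_eq_sum_indicator n G]
  exact integrable_finsetSum _ fun B hB =>
    (integrable_const _).indicator (measurableSet_countablePartition n (by simpa using hB))

lemma integral_comp_countablePartitionSet {E : Type*} [NormedAddCommGroup E] [NormedSpace ℝ E]
    [CompleteSpace E] (n : ℕ) (G : Set X → E) :
    ∫ x, G (countablePartitionSet n x) ∂μ =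
      ∑ B ∈ (finite_countablePartition X n).toFinset, μ.real B • G B := by
  simp_rw [comp_countablePartitionSet_eq_sum_indicator n G]
  rw [integral_finsetSum _ fun B hB =>
    (integrable_const _).indicator (measurableSet_countablePartition n (by simpa using hB))]
  exact Finset.sum_congr rfl fun B hB =>
    integral_indicator_const _ (measurableSet_countablePartition n (by simpa using hB))

lemma integrable_partitionAverage (n : ℕ) (k : X → ℝ) : Integrable (partitionAverage μ n k) μ :=
  integrable_comp_countablePartitionSet μ n fun B => ⨍ y in B, k y ∂μ

lemma setIntegral_partitionAverage_of_mem {n : ℕ} (k : X → ℝ) {B : Set X}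
    (hB : B ∈ countablePartition X n) :
    ∫ x in B, partitionAverage μ n k x ∂μ = ∫ x in B, k x ∂μ := by
  rw [setIntegral_congr_fun (measurableSet_countablePartition n hB)
    fun x hx => partitionAverage_of_mem hB hx, setIntegral_const,
    measure_smul_setAverage _ (measure_ne_top μ B)]

lemma partitionAverage_ae_eq_condExp (n : ℕ) {k : X → ℝ} (hk : Integrable k μ) :
    partitionAverage μ n k =ᵐ[μ] μ[k | countableFiltration X n] := by
  refine ae_eq_condExp_of_forall_setIntegral_eq ((countableFiltration X).le n) hk
    (fun t _ _ => (integrable_partitionAverage μ n k).integrableOn) (fun t ht _ => ?_)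
    (stronglyMeasurable_partitionAverage μ n k).aestronglyMeasurable
  obtain ⟨S, hS, rfl⟩ := (measurableSet_generateFrom_countablePartition_iff n t).mp ht
  have hmeas : ∀ B ∈ S, MeasurableSet B := fun B hB => measurableSet_countablePartition n (hS hB)
  have hdisj : (S : Set (Set X)).Pairwise (Function.onFun Disjoint id) :=
    fun B hB B' hB' hne => disjoint_countablePartition (hS hB) (hS hB') hne
  rw [Set.sUnion_eq_biUnion, Finset.set_biUnion_coe,
    integral_biUnion_finset S hmeas hdisj
      fun _ _ => (integrable_partitionAverage μ n k).integrableOn,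
    integral_biUnion_finset S hmeas hdisj fun _ _ => hk.integrableOn]
  exact Finset.sum_congr rfl fun B hB => setIntegral_partitionAverage_of_mem μ k (hS hB)

lemma tendsto_partitionAverage {k : X → ℝ} (hk : Integrable k μ) :
    ∀ᵐ x ∂μ, Tendsto (partitionAverage μ · k x) atTop (𝓝 (k x)) := by
  set k' := hk.aestronglyMeasurable.mk k
  have hkk' : k =ᵐ[μ] k' := hk.aestronglyMeasurable.ae_eq_mk
  have hk' : Integrable k' μ := hk.congr hkk'
  have hmeas : StronglyMeasurable[⨆ n, countableFiltration X n] k' := by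
    rw [iSup_countableFiltration]
    exact hk.aestronglyMeasurable.stronglyMeasurable_mk
  have hcond := ae_all_iff.mpr fun n => partitionAverage_ae_eq_condExp μ n hk'
  filter_upwards [hk'.tendsto_ae_condExp hmeas, hcond, hkk'] with x hx hxn hxk
  simp_rw [partitionAverage_congr_ae μ hkk', hxk, hxn]
  exact hx

lemma ae_abs_partitionAverage_le (n : ℕ) {k : X → ℝ} (hk : Integrable k μ) {C : ℝ}
    (hC : ∀ᵐ x ∂μ, |k x| ≤ C) : ∀ᵐ x ∂μ, |partitionAverage μ n k x| ≤ C := by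
  filter_upwards [partitionAverage_ae_eq_condExp μ n hk, ae_bdd_abs_condExp_of_ae_bdd_abs hC]
    with x hx hxC
  rwa [hx]

lemma eLpNorm_partitionAverage_le (n : ℕ) {k : X → ℝ} (hk : Integrable k μ) {p : ℝ≥0∞}
    (hp : 1 ≤ p) : eLpNorm (partitionAverage μ n k) p μ ≤ eLpNorm k p μ := by
  rw [eLpNorm_congr_ae (partitionAverage_ae_eq_condExp μ n hk)]
  exact eLpNorm_condExp_le_eLpNorm k hp

lemma integral_prod_partitionAverage {ι : Type*} [Fintype ι] (n : ℕ) (k : ι → X → ℝ) :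
    ∫ x, ∏ i, partitionAverage μ n (k i) x ∂μ =
      ∑ B ∈ (finite_countablePartition X n).toFinset, μ.real B * ∏ i, ⨍ y in B, k i y ∂μ :=
  integral_comp_countablePartitionSet μ n fun B => ∏ i, ⨍ y in B, k i y ∂μ

lemma tendsto_integral_prod_partitionAverage {ι : Type*} [Fintype ι] {k : ι → X → ℝ}
    (hk : ∀ i, Integrable (k i) μ) {C : ι → ℝ} (hC : ∀ i, ∀ᵐ x ∂μ, |k i x| ≤ C i) :
    Tendsto (fun n => ∫ x, ∏ i, partitionAverage μ n (k i) x ∂μ) atTop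
      (𝓝 (∫ x, ∏ i, k i x ∂μ)) := by
  refine tendsto_integral_of_dominated_convergence (fun _ => ∏ i, C i)
    (fun n => (integrable_comp_countablePartitionSet μ n
      fun B => ∏ i, ⨍ y in B, k i y ∂μ).aestronglyMeasurable)
    (integrable_const _) (fun n => ?_) ?_
  · filter_upwards [ae_all_iff.mpr fun i => ae_abs_partitionAverage_le μ n (hk i) (hC i)]
      with x hx
    rw [Real.norm_eq_abs, Finset.abs_prod]
    exact Finset.prod_le_prod (fun i _ => abs_nonneg _) fun i _ => hx i
  · filter_upwards [ae_all_iff.mpr fun i => tendsto_partitionAverage μ (hk i)] with x hx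
    exact tendsto_finsetProd _ fun i _ => hx i

lemma norm_integral_prod_partitionAverage_le [IsProbabilityMeasure μ] {ι : Type*} [Fintype ι]
    (n : ℕ) {p : ℝ≥0∞} (hp1 : 1 ≤ p) (hp_top : p ≠ ∞) (hp : (Fintype.card ι : ℝ≥0∞) ≤ p)
    {k : ι → X → ℝ} (hk : ∀ i, MemLp (k i) p μ) :
    ‖∫ x, ∏ i, partitionAverage μ n (k i) x ∂μ‖ ≤ ∏ i, (eLpNorm (k i) p μ).toReal := by
  have hbound : ‖∫ x, ∏ i, partitionAverage μ n (k i) x ∂μ‖ₑ ≤ ∏ i, eLpNorm (k i) p μ :=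
    calc ‖∫ x, ∏ i, partitionAverage μ n (k i) x ∂μ‖ₑ
        ≤ ∫⁻ x, ∏ i, ‖partitionAverage μ n (k i) x‖ₑ ∂μ := by
          simpa only [enorm_eq_nnnorm, nnnorm_prod, ENNReal.ofNNReal_finsetProd] using
            enorm_integral_le_lintegral_enorm fun x => ∏ i, partitionAverage μ n (k i) x
      _ ≤ ∏ i, eLpNorm (partitionAverage μ n (k i)) p μ :=
          lintegral_prod_enorm_le_prod_eLpNorm μ (by positivity) hp_top hp
            fun i => (integrable_partitionAverage μ n (k i)).aestronglyMeasurable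
      _ ≤ ∏ i, eLpNorm (k i) p μ := Finset.prod_le_prod' fun i _ =>
          eLpNorm_partitionAverage_le μ n ((hk i).integrable hp1) hp1
  rw [← toReal_enorm, ← ENNReal.toReal_prod]
  exact ENNReal.toReal_mono (ENNReal.prod_ne_top fun i _ => (hk i).eLpNorm_ne_top) hbound

end PartitionAverage

section SetIntegralCLM

variable {α E : Type*} [MeasurableSpace α] [NormedAddCommGroup E] [NormedSpace ℝ E]
  (ν : Measure α) [IsProbabilityMeasure ν] (q : ℝ≥0∞) [Fact (1 ≤ q)]

lemma norm_setIntegral_le_norm (A : Set α) (g : Lp E q ν) : ‖∫ x in A, g x ∂ν‖ ≤ ‖g‖ := by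
  refine (norm_integral_le_integral_norm _).trans ?_
  refine (setIntegral_le_integral (Lp.memLp g |>.integrable Fact.out).norm
    (ae_of_all _ fun _ => norm_nonneg _)).trans ?_
  rw [integral_norm_eq_lintegral_enorm (Lp.aestronglyMeasurable g),
    ← eLpNorm_one_eq_lintegral_enorm, Lp.norm_def]
  exact ENNReal.toReal_mono (Lp.eLpNorm_ne_top g)
    (eLpNorm_le_eLpNorm_of_exponent_le Fact.out (Lp.aestronglyMeasurable g))

noncomputable def setIntegralCLM (A : Set α) : Lp E q ν →L[ℝ] E :=
  LinearMap.mkContinuous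
    { toFun g := ∫ x in A, g x ∂ν
      map_add' g g' := by
        rw [← integral_add (Lp.memLp g |>.integrable Fact.out).integrableOn
          (Lp.memLp g' |>.integrable Fact.out).integrableOn]
        exact integral_congr_ae (ae_restrict_of_ae (Lp.coeFn_add g g'))
      map_smul' c g := by
        rw [← integral_smul]
        exact integral_congr_ae (ae_restrict_of_ae (Lp.coeFn_smul c g)) }
    1 fun g => by simpa using norm_setIntegral_le_norm ν q A g

lemma setIntegralCLM_apply (A : Set α) (g : Lp E q ν) :
    setIntegralCLM ν q A g = ∫ x in A, g x ∂ν := rfl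

end SetIntegralCLM

lemma tendsto_apply_of_dense_span {𝕜 ι E F : Type*} [NontriviallyNormedField 𝕜]
    [SeminormedAddCommGroup E] [NormedSpace 𝕜 E] [NormedAddCommGroup F] [NormedSpace 𝕜 F]
    {l : Filter ι} {ψ : ι → E →L[𝕜] F} {Φ : E →L[𝕜] F} {C : NNReal} (hψ : ∀ i, ‖ψ i‖ ≤ C)
    {S : Set E} (hS : Dense (Submodule.span 𝕜 S : Set E))
    (hconv : ∀ e ∈ S, Tendsto (ψ · e) l (𝓝 (Φ e))) (e : E) :
    Tendsto (ψ · e) l (𝓝 (Φ e)) := by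
  let T : Submodule 𝕜 E :=
    { carrier := {e | Tendsto (ψ · e) l (𝓝 (Φ e))}
      add_mem' := fun {a b} ha hb => by simpa using ha.add hb
      zero_mem' := by simpa using tendsto_const_nhds
      smul_mem' := fun c a ha => by simpa using ha.const_smul c }
  have hequi : Equicontinuous fun i => ⇑(ψ i) := (LipschitzWith.uniformEquicontinuous _ C fun i =>
    (ψ i).lipschitzWith_of_opNorm_le (hψ i)).equicontinuous
  have hT : IsClosed (T : Set E) := hequi.isClosed_setOfPred_tendsto Φ.continuous
  have hST : Submodule.span 𝕜 S ≤ T := Submodule.span_le.mpr hconv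
  exact hT.closure_subset_iff.mpr hST (hS e)

lemma dense_setOf_ae_norm_le {α E : Type*} [MeasurableSpace α] [NormedAddCommGroup E]
    {μ : Measure α} {p : ℝ≥0∞} [Fact (1 ≤ p)] (hp : p ≠ ∞) :
    Dense {u : Lp E p μ | ∃ C : ℝ, ∀ᵐ x ∂μ, ‖u x‖ ≤ C} := by
  refine (Lp.simpleFunc.denseRange hp).mono ?_
  rintro _ ⟨u, rfl⟩
  obtain ⟨C, hC⟩ := (Lp.simpleFunc.toSimpleFunc u).exists_forall_norm_le
  exact ⟨C, (Lp.simpleFunc.toSimpleFunc_eq_toFun u).mono fun x hx => hx ▸ hC x⟩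

namespace IsPTP

variable {X : Type} [MeasurableSpace X] {μ : Measure X} {d : ℕ} {p : Fin d → ℝ≥0∞}
  [∀ i, Fact (1 ≤ p i)] {E : Type} [NormedAddCommGroup E] [NormedSpace ℝ E] [CompleteSpace E]
  {tp : ContinuousMultilinearMap ℝ (fun i : Fin d => Lp ℝ (p i) μ) E}

lemma ext (hE : IsPTP μ p E tp) {F : Type*} [NormedAddCommGroup F] [NormedSpace ℝ F]
    {L L' : E →L[ℝ] F} (h : ∀ f, L (tp f) = L' (tp f)) : L = L' :=
  ContinuousLinearMap.ext_on hE.denseSpan (by rintro _ ⟨f, rfl⟩; exact h f)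

lemma opNorm_le_of_forall (hE : IsPTP μ p E tp) {F : Type} [NormedAddCommGroup F]
    [NormedSpace ℝ F] [CompleteSpace F] (L : E →L[ℝ] F) {C : ℝ} (hC : 0 ≤ C)
    (h : ∀ f, ‖L (tp f)‖ ≤ C * ∏ i, ‖f i‖) : ‖L‖ ≤ C := by
  obtain ⟨L', hL', hnorm⟩ := hE.lift F (L.compContinuousMultilinearMap tp)
  rw [hE.ext fun f => (hL' f).symm, hnorm]
  exact ContinuousMultilinearMap.opNorm_le_bound hC h

lemma dense_span_image_pi (hE : IsPTP μ p E tp) {S : ∀ i, Set (Lp ℝ (p i) μ)}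
    (hS : ∀ i, Dense (S i)) : Dense (Submodule.span ℝ (tp '' Set.univ.pi S) : Set E) := by
  have hrange : Set.range tp ⊆ closure (Submodule.span ℝ (tp '' Set.univ.pi S) : Set E) := by
    rintro _ ⟨f, rfl⟩
    exact closure_mono Submodule.subset_span
      (mem_closure_image tp.cont.continuousAt (dense_pi Set.univ (fun i _ => hS i) f))
  have hspan := Submodule.span_le (p := (Submodule.span ℝ (tp '' Set.univ.pi S)).topologicalClosure)
    |>.mpr hrange
  exact (hE.denseSpan.mono hspan).of_closure

end IsPTP

section BlockDiagonal

variable {X : Type} [MeasurableSpace X] [CountablyGenerated X] (μ : Measure X)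
  [IsProbabilityMeasure μ] (d : ℕ) (p : ℝ≥0∞) [Fact (1 ≤ p)]

noncomputable def blockDiagIntegral (s : Set X) (n : ℕ) : Lp ℝ p (pm μ d) →L[ℝ] ℝ :=
  ∑ B ∈ (finite_countablePartition X n).toFinset,
    (μ.real B * (μ.real B)⁻¹ ^ d) • setIntegralCLM (pm μ d) p (Set.univ.pi fun _ => B ∩ s)

variable {μ d p}

lemma blockDiagIntegral_nonneg (s : Set X) (n : ℕ) {g : Lp ℝ p (pm μ d)}
    (hg : 0 ≤ᵐ[pm μ d] g) : 0 ≤ blockDiagIntegral μ d p s n g := by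
  simp only [blockDiagIntegral, FunLike.coe_sum, Finset.sum_apply,
    FunLike.coe_smul, Pi.smul_apply, setIntegralCLM_apply, smul_eq_mul]
  exact Finset.sum_nonneg fun B _ => mul_nonneg
    (mul_nonneg measureReal_nonneg (pow_nonneg (inv_nonneg.mpr measureReal_nonneg) _))
    (integral_nonneg_of_ae (ae_restrict_of_ae hg))

lemma blockDiagIntegral_of_ae_eq_prod {s : Set X} (hs : MeasurableSet s) (n : ℕ)
    {g : Lp ℝ p (pm μ d)} {h : Fin d → X → ℝ} (hg : g =ᵐ[pm μ d] fun x => ∏ i, h i (x i)) :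
    blockDiagIntegral μ d p s n g = ∫ x, ∏ i, partitionAverage μ n (s.indicator (h i)) x ∂μ := by
  rw [integral_prod_partitionAverage]
  simp only [blockDiagIntegral, FunLike.coe_sum, Finset.sum_apply,
    FunLike.coe_smul, Pi.smul_apply, setIntegralCLM_apply, smul_eq_mul]
  refine Finset.sum_congr rfl fun B _ => ?_
  rw [integral_congr_ae (ae_restrict_of_ae hg), Measure.restrict_pi_pi,
    integral_fintype_prod_eq_prod]
  simp_rw [setAverage_eq, setIntegral_indicator hs, smul_eq_mul, Finset.prod_mul_distrib,
    Finset.prod_const, Finset.card_univ, Fintype.card_fin]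
  ring

end BlockDiagonal

section Diagonal

variable {X : Type} [MeasurableSpace X] {μ : Measure X} {d : ℕ} {p r : ℝ≥0∞} [Fact (1 ≤ p)]
  [Fact (1 ≤ r)] {E : Type} [NormedAddCommGroup E] [NormedSpace ℝ E] [CompleteSpace E]
  {tp : ContinuousMultilinearMap ℝ (fun _ : Fin d => Lp ℝ p μ) E}

lemma setIntegral_diag_apply_tp (hd : 1 ≤ d) {D : E →L[ℝ] Lp ℝ r μ}
    (hD : IsDiag μ (fun _ : Fin d => p) r tp D) {s : Set X} (hs : MeasurableSet s)
    (f : Fin d → Lp ℝ p μ) :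
    ∫ x in s, D (tp f) x ∂μ = ∫ x, ∏ i, s.indicator (f i) x ∂μ := by
  have : Nonempty (Fin d) := ⟨⟨0, hd⟩⟩
  simp_rw [prod_indicator_apply, Finset.mem_univ, Set.iInter_true, Set.iInter_const,
    integral_indicator hs, Finset.prod_apply]
  exact integral_congr_ae (ae_restrict_of_ae (hD.2 f))

lemma tendsto_blockDiagIntegral_apply_embed [CountablyGenerated X] [IsProbabilityMeasure μ]
    (hd : 1 ≤ d) (hp : (d : ℝ≥0∞) ≤ p) (hp' : p ≠ ∞)
    (hE : IsPTP μ (fun _ : Fin d => p) E tp) {J : E →L[ℝ] Lp ℝ p (pm μ d)}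
    (hJ : IsEmbed μ (fun _ : Fin d => p) p tp J) {D : E →L[ℝ] Lp ℝ r μ}
    (hD : IsDiag μ (fun _ : Fin d => p) r tp D) {s : Set X} (hs : MeasurableSet s) (e : E) :
    Tendsto (fun n => blockDiagIntegral μ d p s n (J e)) atTop (𝓝 (∫ x in s, D e x ∂μ)) := by
  have hp1 : 1 ≤ p := Fact.out
  have hk : ∀ (f : Fin d → Lp ℝ p μ) i, MemLp (s.indicator (f i)) p μ :=
    fun f i => (Lp.memLp (f i)).indicator hs
  have hψ : ∀ n f, blockDiagIntegral μ d p s n (J (tp f)) =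
      ∫ x, ∏ i, partitionAverage μ n (s.indicator (f i)) x ∂μ :=
    fun n f => blockDiagIntegral_of_ae_eq_prod hs n (hJ f)
  have hψ_norm : ∀ n, ‖(blockDiagIntegral μ d p s n).comp J‖ ≤ (1 : NNReal) := by
    refine fun n => hE.opNorm_le_of_forall _ zero_le_one fun f => ?_
    rw [ContinuousLinearMap.comp_apply, hψ, NNReal.coe_one, one_mul]
    refine (norm_integral_prod_partitionAverage_le μ n hp1 hp' (by simpa using hp) (hk f)).trans ?_
    refine Finset.prod_le_prod (fun _ _ => ENNReal.toReal_nonneg) fun i _ => ?_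
    exact ENNReal.toReal_mono (Lp.eLpNorm_ne_top (f i)) (eLpNorm_indicator_le _)
  refine tendsto_apply_of_dense_span (Φ := (setIntegralCLM μ r s).comp D) hψ_norm
    (hE.dense_span_image_pi fun _ => dense_setOf_ae_norm_le hp') ?_ e
  rintro _ ⟨f, hf, rfl⟩
  choose C hC using fun i => hf i trivial
  simp only [ContinuousLinearMap.comp_apply, hψ, setIntegralCLM_apply,
    setIntegral_diag_apply_tp hd hD hs]
  refine tendsto_integral_prod_partitionAverage μ (fun i => (hk f i).integrable hp1) (C := C)
    fun i => (hC i).mono fun x hx => ?_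
  exact (Real.norm_eq_abs _ ▸ norm_indicator_le_norm_self _ x).trans hx

end Diagonal

theorem statement3_general
    {X : Type} [MeasurableSpace X] [StandardBorelSpace X]
    (μ : Measure X) [IsProbabilityMeasure μ]
    (d : ℕ) (hd : 1 ≤ d) (p r : ℝ≥0∞) [Fact (1 ≤ p)] [Fact (1 ≤ r)]
    (hp : (d : ℝ≥0∞) ≤ p) (hp' : p ≠ ∞)
    (E : Type) [NormedAddCommGroup E] [NormedSpace ℝ E] [CompleteSpace E]
    (tp : ContinuousMultilinearMap ℝ (fun _ : Fin d => Lp ℝ p μ) E)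
    (hE : IsPTP μ (fun _ : Fin d => p) E tp)
    (J : E →L[ℝ] Lp ℝ p (pm μ d)) (hJ : IsEmbed μ (fun _ : Fin d => p) p tp J)
    (D : E →L[ℝ] Lp ℝ r μ) (hD : IsDiag μ (fun _ : Fin d => p) r tp D)
    (f : E) (hf : 0 ≤ᵐ[pm μ d] (J f : (Fin d → X) → ℝ)) :
    0 ≤ᵐ[μ] (D f : X → ℝ) := by
  refine ae_nonneg_of_forall_setIntegral_nonneg ((Lp.memLp (D f)).integrable Fact.out)
    fun s hs _ => ?_
  exact ge_of_tendsto' (tendsto_blockDiagIntegral_apply_embed hd hp hp' hE hJ hD hs f)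
    fun n => blockDiagIntegral_nonneg s n hf

/-- Corollary 1: the diagonal restriction operator `D_d` preserves
positivity: if `J_d f ≥ 0` a.e. on `X^d` then `D_d f ≥ 0` a.e. on `X`. -/
theorem statement3
    {X : Type} [MeasurableSpace X] [StandardBorelSpace X]
    (μ : Measure X) [IsProbabilityMeasure μ]
    (d : ℕ) (hd : 1 ≤ d) (p r : ℝ≥0∞) [Fact (1 ≤ p)] [Fact (1 ≤ r)]
    (hp : (d : ℝ≥0∞) ≤ p) (hp' : p ≠ ∞) (hr : r = p / d)
    (E : Type) [NormedAddCommGroup E] [NormedSpace ℝ E] [CompleteSpace E]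
    (tp : ContinuousMultilinearMap ℝ (fun _ : Fin d => Lp ℝ p μ) E)
    (hE : IsPTP μ (fun _ : Fin d => p) E tp)
    (J : E →L[ℝ] Lp ℝ p (pm μ d)) (hJ : IsEmbed μ (fun _ : Fin d => p) p tp J)
    (D : E →L[ℝ] Lp ℝ r μ) (hD : IsDiag μ (fun _ : Fin d => p) r tp D)
    (f : E) (hf : 0 ≤ᵐ[pm μ d] (J f : (Fin d → X) → ℝ)) :
    0 ≤ᵐ[μ] (D f : X → ℝ) :=
  statement3_general μ d hd p r hp hp' E tp hE J hJ D hD f hf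

end VonMises
end
end

section
/- Let T be a measure preserving transformation of (X,𝓕,μ) and let g^∅ ∈ L_{2,π}^{sym}(μ²) satisfy E(g^∅ | T^{−(0,1)}𝓕^{⊗2}) = 0, with eigenfunction expansion g^∅(x_1,x_2) = Σ_{l=1}^{∞} λ_l φ_l(x_1) φ_l(x_2), where (φ_l) is an orthonormal sequence in L_2(μ) and Σ_l |λ_l| < ∞. Then for every m with λ_m ≠ 0, the eigenfunction φ_m satisfies E(φ_m | T^{−1}𝓕) = 0 μ-almost surely. -/
open MeasureTheory Filter Topology ENNReal ProbabilityTheory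

noncomputable section

/-!
Fix a measurable `B` and pair `g0` with the elementary tensor `φ_m ⊗ 1_{T⁻¹B}`. This test
function is measurable for `T^{−(0,1)}𝓕^{⊗2}`, so by the pull-out property the pairing equals
the pairing with `E(g0 | T^{−(0,1)}𝓕^{⊗2}) = 0`. On the other hand, expanding
`g0 = Σ_l λ_l φ_l ⊗ φ_l` and using orthonormality, the pairing is `λ_m ∫_{T⁻¹B} φ_m`. Hence
`φ_m` integrates to zero over every set of `T⁻¹𝓕`.
-/

namespace VonMises

open scoped InnerProductSpace

variable {X : Type} [MeasurableSpace X]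

theorem integral_mul_eq_zero_of_condExp_eq_zero {Ω : Type*} {m m₀ : MeasurableSpace Ω}
    {μ : Measure Ω} (hm : m ≤ m₀) [SigmaFinite (μ.trim hm)] {f g : Ω → ℝ}
    (hf : StronglyMeasurable[m] f) (hfg : Integrable (f * g) μ) (hg : Integrable g μ)
    (hg0 : μ[g | m] =ᵐ[μ] 0) : ∫ x, f x * g x ∂μ = 0 :=
  calc ∫ x, f x * g x ∂μ = ∫ x, μ[f * g | m] x ∂μ := (integral_condExp hm).symm
    _ = ∫ x, f x * μ[g | m] x ∂μ :=
      integral_congr_ae (condExp_mul_of_stronglyMeasurable_left hf hfg hg)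
    _ = 0 := by
      rw [integral_congr_ae (g := 0) (hg0.mono fun x hx => by simp [hx])]
      simp

theorem condExp_comap_ae_eq_zero_of_setIntegral_preimage_eq_zero {Y : Type*}
    [MeasurableSpace Y] {μ : Measure X} [IsFiniteMeasure μ] {T : X → Y} (hT : Measurable T)
    {f : X → ℝ} (hf : Integrable f μ)
    (h0 : ∀ B, MeasurableSet B → ∫ x in T ⁻¹' B, f x ∂μ = 0) :
    μ[f | MeasurableSpace.comap T inferInstance] =ᵐ[μ] 0 := by
  refine (ae_eq_condExp_of_forall_setIntegral_eq hT.comap_le hf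
    (fun _ _ _ => integrableOn_zero) ?_ stronglyMeasurable_zero.aestronglyMeasurable).symm
  rintro _ ⟨B, hB, rfl⟩ _
  simp [h0 B hB]

theorem integral_apply_zero_mul_apply_one (μ : Measure X) [SigmaFinite μ] (F G : X → ℝ) :
    ∫ x, F (x 0) * G (x 1) ∂pm μ 2 = (∫ x, F x ∂μ) * ∫ x, G x ∂μ := by
  simpa [Fin.prod_univ_two] using integral_fin_nat_prod_eq_prod (μ := fun _ => μ) ![F, G]

section TensorIndicator

variable {μ : Measure X} [IsProbabilityMeasure μ]

theorem memLp_apply_zero_mul_indicator_apply_one (f : Lp ℝ 2 μ) {C : Set X}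
    (hC : MeasurableSet C) :
    MemLp (fun x : Fin 2 → X => f (x 0) * C.indicator 1 (x 1)) 2 (pm μ 2) := by
  have h := ((Lp.memLp f).comp_measurePreserving
    (measurePreserving_eval (fun _ : Fin 2 => μ) 0)).indicator (measurable_pi_apply 1 hC)
  refine h.ae_eq (ae_of_all _ fun x => ?_)
  by_cases hx : x 1 ∈ C <;> simp [hx]

def tensorIndicatorLp (f : Lp ℝ 2 μ) {C : Set X} (hC : MeasurableSet C) : Lp ℝ 2 (pm μ 2) :=
  (memLp_apply_zero_mul_indicator_apply_one f hC).toLp _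

theorem inner_tensorIndicatorLp (f : Lp ℝ 2 μ) {C : Set X} (hC : MeasurableSet C)
    {Q : Lp ℝ 2 (pm μ 2)} {u v : Lp ℝ 2 μ}
    (hQ : (Q : (Fin 2 → X) → ℝ) =ᵐ[pm μ 2] fun x => u (x 0) * v (x 1)) :
    ⟪tensorIndicatorLp f hC, Q⟫_ℝ = ⟪f, u⟫_ℝ * ∫ x in C, v x ∂μ := by
  rw [L2.inner_def, L2.inner_def, ← integral_indicator hC, ← integral_apply_zero_mul_apply_one]
  refine integral_congr_ae ?_
  filter_upwards [(memLp_apply_zero_mul_indicator_apply_one f hC).coeFn_toLp, hQ] with x h1 h2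
  rw [tensorIndicatorLp, h1, h2]
  by_cases hx : x 1 ∈ C
  · simp [hx]
    ring
  · simp [hx]

theorem inner_tensorIndicatorLp_preimage_eq_zero {T : X → X} (hT : Measurable T) (f : Lp ℝ 2 μ)
    {B : Set X} (hB : MeasurableSet B) {G : Lp ℝ 2 (pm μ 2)}
    (hG : (pm μ 2)[(G : (Fin 2 → X) → ℝ) |
        MeasurableSpace.comap (fun x : Fin 2 → X => ![x 0, T (x 1)]) inferInstance]
      =ᵐ[pm μ 2] 0) :
    ⟪tensorIndicatorLp f (hT hB), G⟫_ℝ = 0 := by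
  have hψ : Measurable fun x : Fin 2 → X => ![x 0, T (x 1)] := by
    refine measurable_pi_iff.2 fun i => ?_
    fin_cases i
    · exact measurable_pi_apply 0
    · exact hT.comp (measurable_pi_apply 1)
  have hmeas : StronglyMeasurable[MeasurableSpace.comap
        (fun x : Fin 2 → X => ![x 0, T (x 1)]) inferInstance]
      (fun x : Fin 2 → X => f (x 0) * (T ⁻¹' B).indicator 1 (x 1)) := by
    have hF : StronglyMeasurable fun y : Fin 2 → X => f (y 0) * B.indicator 1 (y 1) :=
      ((Lp.stronglyMeasurable f).comp_measurable (measurable_pi_apply 0)).mul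
        ((stronglyMeasurable_one.indicator hB).comp_measurable (measurable_pi_apply 1))
    exact hF.comp_measurable (comap_measurable _)
  have hint := (memLp_apply_zero_mul_indicator_apply_one f (hT hB)).integrable_mul (Lp.memLp G)
  rw [L2.inner_def, ← integral_mul_eq_zero_of_condExp_eq_zero hψ.comap_le hmeas hint
    ((Lp.memLp G).integrable one_le_two) hG]
  refine integral_congr_ae ?_
  filter_upwards [(memLp_apply_zero_mul_indicator_apply_one f (hT hB)).coeFn_toLp] with x hx
  rw [tensorIndicatorLp, hx]
  simp only [RCLike.inner_apply, conj_trivial]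
  ring

end TensorIndicator

theorem statement19_general
    {X : Type} [MeasurableSpace X]
    (μ : Measure X) [IsProbabilityMeasure μ]
    (T : X → X) (hT : MeasurePreserving T μ μ)
    (E : Type) [NormedAddCommGroup E] [NormedSpace ℝ E]
    (J : E →L[ℝ] Lp ℝ 2 (pm μ 2))
    (g0 : E)
    (hmart : (pm μ 2)[(J g0 : (Fin 2 → X) → ℝ) |
        MeasurableSpace.comap (fun x : Fin 2 → X => ![x 0, T (x 1)]) inferInstance]
      =ᵐ[pm μ 2] 0)
    -- the eigenfunction expansion `g0 = Σ_l λ_l φ_l ⊗ φ_l`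
    (lam : ℕ → ℝ) (φ : ℕ → Lp ℝ 2 μ)
    (hON : Orthonormal ℝ φ)
    (P : ℕ → Lp ℝ 2 (pm μ 2))
    (hP : ∀ l, (P l : (Fin 2 → X) → ℝ) =ᵐ[pm μ 2]
      fun x => (φ l : X → ℝ) (x 0) * (φ l : X → ℝ) (x 1))
    (hexp : HasSum (fun l => lam l • P l) (J g0)) :
    ∀ m : ℕ, lam m ≠ 0 →
      μ[(φ m : X → ℝ) | MeasurableSpace.comap T inferInstance] =ᵐ[μ] 0 := by
  intro m hm
  refine condExp_comap_ae_eq_zero_of_setIntegral_preimage_eq_zero hT.measurable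
    ((Lp.memLp _).integrable one_le_two) fun B hB => ?_
  set H := tensorIndicatorLp (φ m) (hT.measurable hB)
  have hpair : HasSum (fun l => lam l * ⟪H, P l⟫_ℝ) 0 := by
    rw [← inner_tensorIndicatorLp_preimage_eq_zero hT.measurable (φ m) hB hmart]
    simpa [real_inner_smul_right] using (innerSL ℝ H).hasSum hexp
  have hcoeff : ∀ l, lam l * ⟪H, P l⟫_ℝ =
      if l = m then lam m * ∫ x in T ⁻¹' B, φ m x ∂μ else 0 := by
    intro l
    rw [inner_tensorIndicatorLp _ _ (hP l), orthonormal_iff_ite.1 hON]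
    by_cases hl : l = m
    · simp [hl]
    · simp [hl, Ne.symm hl]
  simp_rw [hcoeff] at hpair
  exact (mul_eq_zero.1 ((hasSum_ite_eq m _).unique hpair)).resolve_left hm

/-- if a symmetric kernel `g^∅ ∈ L_{2,π}^{sym}(μ²)` with eigenfunction
expansion `g^∅ = Σ_l λ_l φ_l ⊗ φ_l` satisfies `E(g^∅ | T^{−(0,1)}𝓕^{⊗2}) = 0`, then each
eigenfunction with `λ_m ≠ 0` is a reversed martingale difference:
`E(φ_m | T^{−1}𝓕) = 0` a.e. -/
theorem statement19
    {X : Type} [MeasurableSpace X] [StandardBorelSpace X]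
    (μ : Measure X) [IsProbabilityMeasure μ]
    (T : X → X) (hT : MeasurePreserving T μ μ)
    (E : Type) [NormedAddCommGroup E] [NormedSpace ℝ E] [CompleteSpace E]
    (tp : ContinuousMultilinearMap ℝ (fun _ : Fin 2 => Lp ℝ 2 μ) E)
    (hE : IsPTP μ (fun _ : Fin 2 => (2 : ℝ≥0∞)) E tp)
    (J : E →L[ℝ] Lp ℝ 2 (pm μ 2))
    (hJ : IsEmbed μ (fun _ : Fin 2 => (2 : ℝ≥0∞)) 2 tp J)
    (g0 : E)
    (hsym : Symm μ 2 (J g0 : (Fin 2 → X) → ℝ))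
    (hmart : (pm μ 2)[(J g0 : (Fin 2 → X) → ℝ) |
        MeasurableSpace.comap (fun x : Fin 2 → X => ![x 0, T (x 1)]) inferInstance]
      =ᵐ[pm μ 2] 0)
    -- the eigenfunction expansion `g0 = Σ_l λ_l φ_l ⊗ φ_l`
    (lam : ℕ → ℝ) (φ : ℕ → Lp ℝ 2 μ)
    (hON : Orthonormal ℝ φ)
    (habs : Summable fun l => |lam l|)
    (P : ℕ → Lp ℝ 2 (pm μ 2))
    (hP : ∀ l, (P l : (Fin 2 → X) → ℝ) =ᵐ[pm μ 2]
      fun x => (φ l : X → ℝ) (x 0) * (φ l : X → ℝ) (x 1))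
    (hexp : HasSum (fun l => lam l • P l) (J g0)) :
    ∀ m : ℕ, lam m ≠ 0 →
      μ[(φ m : X → ℝ) | MeasurableSpace.comap T inferInstance] =ᵐ[μ] 0 :=
  statement19_general μ T hT E J g0 hmart lam φ hON P hP hexp

end VonMises
end
end
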